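/- arXiv:2012.04782 — 7 statements merged into one kernel-verified Lean document; each statement's English description precedes it below -/
import Mathlib

section
/- Let α ∈ ℓ²(ℤ; ℂ) and |z| > 1. The operator Λ = α·(S - z^{-1})^{-1} (multiplication by the sequence α composed with the resolvent of the shift) is Hilbert–Schmidt with ‖Λ‖_{HS}² = |z|²/(|z|² - 1) · ‖α‖_{ℓ²}². -/
set_option maxHeartbeats 1000000


/-- For `α ∈ ℓ²(ℤ; ℂ)` and `|z| > 1`, the operator `Λ = α · (S - z⁻¹)⁻¹`, whose matrix
kernel is `Λ(n,m) = α_n · z^(m-n+1) 𝟙_{n>m}`, is Hilbert–Schmidt with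
`‖Λ‖_{HS}² = |z|²/(|z|² - 1) · ‖α‖_{ℓ²}²`. -/
theorem Lambda_hilbertSchmidt (z : ℂ) (hz : 1 < ‖z‖)
    (α : lp (fun _ : ℤ => ℂ) 2) :
    HasSum (fun q : ℤ × ℤ =>
        ‖α q.1 * (if q.2 < q.1 then z ^ (q.2 - q.1 + 1) else 0)‖ ^ 2)
      (‖z‖ ^ 2 / (‖z‖ ^ 2 - 1) * ‖α‖ ^ 2) := by
  have hz0 : (0:ℝ) < ‖z‖ := lt_trans one_pos hz
  have hz2 : (1:ℝ) < ‖z‖ ^ 2 := by nlinarith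
  set r : ℝ := (‖z‖ ^ 2)⁻¹ with hr
  have hr0 : 0 ≤ r := by positivity
  have hr1 : r < 1 := by
    rw [hr]; exact inv_lt_one_of_one_lt₀ hz2
  have hgeo : HasSum (fun k : ℕ => r ^ k) (1 - r)⁻¹ := hasSum_geometric_of_lt_one hr0 hr1
  have hg : HasSum (fun k : ℤ => if 0 ≤ k then r ^ k.toNat else 0) (1 - r)⁻¹ := by
    have hinj : Function.Injective (fun n : ℕ => (n : ℤ)) := fun a b h => by
      simpa using h
    rw [← hinj.hasSum_iff]
    · refine hgeo.congr_fun (fun k => ?_)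
      simp [Int.toNat_natCast]
    · intro x hx
      have hxneg : ¬ (0 ≤ x) := by
        intro h
        exact hx ⟨x.toNat, by simp [Int.toNat_of_nonneg h]⟩
      simp [hxneg]
  have ha : HasSum (fun n : ℤ => ‖α n‖ ^ 2) (‖α‖ ^ 2) := by
    have h2 : (0:ℝ) < (2 : ENNReal).toReal := by norm_num
    have := lp.hasSum_norm h2 α
    have h2' : (2 : ENNReal).toReal = ((2:ℕ):ℝ) := by norm_num
    rw [h2'] at this
    simpa [Real.rpow_natCast] using this
  have key : HasSum (fun q : ℤ × ℤ =>
      ‖α q.1‖ ^ 2 * (if 0 ≤ q.2 then r ^ q.2.toNat else 0)) (‖α‖ ^ 2 * (1 - r)⁻¹) :=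
    ha.mul hg (ha.summable.mul_of_nonneg hg.summable (fun _ => sq_nonneg _)
      (fun j => by dsimp only; split <;> positivity))
  let e : ℤ × ℤ ≃ ℤ × ℤ :=
    ⟨fun q => (q.1, q.1 - 1 - q.2), fun q => (q.1, q.1 - 1 - q.2),
      fun q => by simp [Prod.ext_iff],
      fun q => by simp [Prod.ext_iff]⟩
  rw [← e.hasSum_iff]
  have hval : ‖α‖ ^ 2 * (1 - r)⁻¹ = ‖z‖ ^ 2 / (‖z‖ ^ 2 - 1) * ‖α‖ ^ 2 := by
    rw [hr]
    have h1 : (‖z‖:ℝ) ^ 2 ≠ 0 := by positivity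
    have h3 : 1 - (‖z‖ ^ 2)⁻¹ = (‖z‖ ^ 2 - 1) / ‖z‖ ^ 2 := by
      rw [inv_eq_one_div, one_sub_div h1]
    rw [h3, inv_div]
    ring
  rw [← hval]
  refine key.congr_fun (fun q => ?_)
  obtain ⟨n, k⟩ := q
  show ‖α n * (if n - 1 - k < n then z ^ (n - 1 - k - n + 1) else 0)‖ ^ 2
      = ‖α n‖ ^ 2 * (if 0 ≤ k then r ^ k.toNat else 0)
  by_cases hk : 0 ≤ k
  · obtain ⟨m, rfl⟩ : ∃ m : ℕ, k = (m : ℤ) := ⟨k.toNat, (Int.toNat_of_nonneg hk).symm⟩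
    have hlt : n - 1 - (m : ℤ) < n := by omega
    have hexp : n - 1 - (m : ℤ) - n + 1 = -(m : ℤ) := by ring
    rw [if_pos hk, if_pos hlt, hexp, Int.toNat_natCast, norm_mul, mul_pow, norm_zpow]
    congr 1
    rw [hr, zpow_neg, zpow_natCast, inv_pow, ← pow_mul, inv_pow, ← pow_mul, Nat.mul_comm]
  · have hlt : ¬ (n - 1 - k < n) := by omega
    rw [if_neg hk, if_neg hlt, mul_zero, norm_zero, mul_zero]
    norm_num
end

section
/- Let α ∈ ℓ²(ℤ; ℂ) and |z| > 1. The operator Γ = β·(z - S)^{-1}, where β is a sequence with |β_n| = |α_n| for all n, is Hilbert–Schmidt with ‖Γ‖_{HS}² = 1/(|z|² - 1) · ‖α‖_{ℓ²}². -/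
lemma inner_hasSum {r : ℝ} (hr : 1 < r) (n : ℤ) :
    HasSum (fun m : ℤ => if n ≤ m then r ^ (n - m - 1) else 0) (1 / (r - 1)) := by
  have hr0 : 0 < r := lt_trans one_pos hr
  have hinv : r⁻¹ < 1 := inv_lt_one_of_one_lt₀ hr
  have hinv0 : 0 ≤ r⁻¹ := inv_nonneg.mpr hr0.le
  have hgeo : HasSum (fun j : ℕ => r⁻¹ ^ j) (1 - r⁻¹)⁻¹ :=
    hasSum_geometric_of_lt_one hinv0 hinv
  have hgeo' : HasSum (fun j : ℕ => r⁻¹ * r⁻¹ ^ j) (r⁻¹ * (1 - r⁻¹)⁻¹) := hgeo.mul_left _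
  have hval : r⁻¹ * (1 - r⁻¹)⁻¹ = 1 / (r - 1) := by
    field_simp
  rw [hval] at hgeo'
  have hinj : Function.Injective (fun j : ℕ => n + (j : ℤ)) := by
    intro a b h
    simpa using h
  have hfun : ∀ j : ℕ, (fun m : ℤ => if n ≤ m then r ^ (n - m - 1) else 0) (n + (j : ℤ))
      = r⁻¹ * r⁻¹ ^ j := by
    intro j
    have hle : n ≤ n + (j : ℤ) := le_add_of_nonneg_right (Int.natCast_nonneg j)
    simp only [hle, if_true]
    have h1 : n - (n + (j : ℤ)) - 1 = -((j : ℤ) + 1) := by ring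
    rw [h1, zpow_neg, show ((j : ℤ) + 1) = ((j + 1 : ℕ) : ℤ) by push_cast; ring,
      zpow_natCast, pow_succ, mul_inv, ← inv_pow]
    ring
  refine (Function.Injective.hasSum_iff hinj ?_).mp ?_
  · intro m hm
    have : ¬ n ≤ m := by
      intro hle
      obtain ⟨j, hj⟩ := Int.le.dest hle
      exact hm ⟨j, hj⟩
    simp [this]
  · convert hgeo' using 1
    funext j
    exact hfun j


/-- For `α ∈ ℓ²(ℤ; ℂ)`, `|z| > 1`, and a sequence `β` with `|β_n| = |α_n|` for all `n`,
the operator `Γ = β · (z - S)⁻¹`, whose matrix kernel is `Γ(n,m) = β_n · z^(n-m-1) 𝟙_{n≤m}`,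
is Hilbert–Schmidt with `‖Γ‖_{HS}² = 1/(|z|² - 1) · ‖α‖_{ℓ²}²`. -/
theorem Gamma_hilbertSchmidt (z : ℂ) (hz : 1 < ‖z‖)
    (α : lp (fun _ : ℤ => ℂ) 2) (β : ℤ → ℂ) (hβ : ∀ n, ‖β n‖ = ‖α n‖) :
    HasSum (fun q : ℤ × ℤ =>
        ‖β q.1 * (if q.1 ≤ q.2 then z ^ (q.1 - q.2 - 1) else 0)‖ ^ 2)
      (1 / (‖z‖ ^ 2 - 1) * ‖α‖ ^ 2) := by

  set f : ℤ × ℤ → ℝ := fun q =>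
    ‖β q.1 * (if q.1 ≤ q.2 then z ^ (q.1 - q.2 - 1) else 0)‖ ^ 2 with hf
  set r : ℝ := ‖z‖ ^ 2 with hrdef
  have hr : 1 < r := by
    have := one_lt_pow₀ hz (two_ne_zero)
    simpa [hrdef] using this
  have hz0 : (0:ℝ) < ‖z‖ := lt_trans one_pos hz
  have key : ∀ q : ℤ × ℤ, f q = ‖β q.1‖ ^ 2 *
      (if q.1 ≤ q.2 then r ^ (q.1 - q.2 - 1) else 0) := by
    rintro ⟨n, m⟩
    by_cases h : n ≤ m
    · simp only [hf, h, if_true, norm_mul, mul_pow, norm_zpow]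
      congr 1
      rw [← zpow_natCast (‖z‖ ^ (n - m - 1)) 2, ← zpow_mul, mul_comm, hrdef,
        ← zpow_natCast ‖z‖ 2, ← zpow_mul]
    · simp [hf, h]
  have fiber : ∀ n : ℤ, HasSum (fun m => f (n, m)) (‖β n‖ ^ 2 * (1 / (r - 1))) := by
    intro n
    have h := (inner_hasSum hr n).mul_left (‖β n‖ ^ 2)
    have heq : (fun m => f (n, m)) =
        fun m => ‖β n‖ ^ 2 * (if n ≤ m then r ^ (n - m - 1) else 0) :=
      funext fun m => key (n, m)
    rw [heq]
    exact h
  have hα : HasSum (fun n : ℤ => ‖α n‖ ^ 2) (‖α‖ ^ 2) := by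
    have h2 : (0:ℝ) < (2 : ENNReal).toReal := by norm_num
    have := lp.hasSum_norm h2 α
    simpa [ENNReal.toReal_ofNat, Real.rpow_natCast] using this
  have hg : HasSum (fun n : ℤ => ‖β n‖ ^ 2 * (1 / (r - 1))) (‖α‖ ^ 2 * (1 / (r - 1))) := by
    have heq : (fun n : ℤ => ‖β n‖ ^ 2 * (1 / (r - 1))) =
        fun n : ℤ => ‖α n‖ ^ 2 * (1 / (r - 1)) := funext fun n => by rw [hβ]
    rw [heq]
    exact hα.mul_right _
  have hnn : ∀ q, 0 ≤ f q := fun q => by positivity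
  have hsummable : Summable f := by
    refine (summable_prod_of_nonneg hnn).mpr ⟨fun n => (fiber n).summable, ?_⟩
    refine hg.summable.congr fun n => ?_
    exact ((fiber n).tsum_eq).symm
  refine (hsummable.hasSum_iff).mpr ?_
  rw [Summable.tsum_prod' hsummable fun n => (fiber n).summable]
  have : ∀ n : ℤ, ∑' m, f (n, m) = ‖β n‖ ^ 2 * (1 / (r - 1)) := fun n => (fiber n).tsum_eq
  rw [tsum_congr this, hg.tsum_eq]
  ring
end

section
/- Let L be an invertible tridiagonal Jacobi operator (Lf)_n = cosh(κ)f_n − (a_n f_{n+1} + a_{n-1} f_{n-1} + b_n f_n) on ℓ²(ℤ) with a_n > 0, whose Green's function G(n,m) = ⟨δ_n, L^{-1}δ_m⟩ satisfies G(n,m) → 0 as |m| → ∞ for each fixed n. Then the quadratic identity G(n,n+1)[1 + a_n G(n,n+1)] = a_n G(n,n) G(n+1,n+1) holds for all n. -/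
/-! By symmetry, `u = G(n, ·)` and `v = G(·, n+1)` are columns of `L⁻¹`, so they solve the Jacobi
equation away from `n` and `n+1` respectively, so their discrete Wronskian
`W_m = a_m (u_{m+1} v_m - u_m v_{m+1})` is constant for `m ≥ n+1`. The coefficients `a_m` are
matrix entries of the bounded operator `L`, hence bounded, so `W_m → 0` and that constant is `0`.
The jump of `W` across `m = n+1` is `u_{n+1} = G(n,n+1)`, which gives
`a_n (G(n,n+1)² - G(n,n) G(n+1,n+1)) = -G(n,n+1)`. -/

open Filter Topology

section Wronskian

variable {R : Type*} [CommRing R]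

def jacobiExpr (c : R) (a b f : ℤ → R) (m : ℤ) : R :=
  c * f m - (a m * f (m + 1) + a (m - 1) * f (m - 1) + b m * f m)

def wronskian (a u v : ℤ → R) (m : ℤ) : R :=
  a m * (u (m + 1) * v m - u m * v (m + 1))

/-- Discrete Green's formula. -/
theorem wronskian_sub_wronskian_sub_one (c : R) (a b u v : ℤ → R) (m : ℤ) :
    wronskian a u v m - wronskian a u v (m - 1) =
      jacobiExpr c a b v m * u m - jacobiExpr c a b u m * v m := by
  simp only [wronskian, jacobiExpr, sub_add_cancel]
  ring

end Wronskian

theorem eq_zero_of_tendsto_atTop_of_forall_eq_sub_one {f : ℤ → ℝ} {k : ℤ}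
    (hconst : ∀ m, k < m → f m = f (m - 1)) (hf : Tendsto f atTop (𝓝 0)) : f k = 0 := by
  have hfk : ∀ m, k ≤ m → f m = f k := by
    intro m hm
    induction m, hm using Int.leInduction with
    | base => rfl
    | succ m hkm ih => rw [hconst (m + 1) (by omega), add_sub_cancel_right, ih]
  have hf' : Tendsto f atTop (𝓝 (f k)) :=
    tendsto_const_nhds.congr' ((eventually_ge_atTop k).mono fun m hm => (hfk m hm).symm)
  exact tendsto_nhds_unique hf' hf

theorem tendsto_wronskian_cofinite {a u v : ℤ → ℝ} {C : ℝ} (ha : ∀ m, |a m| ≤ C)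
    (hu : Tendsto u cofinite (𝓝 0)) (hv : Tendsto v cofinite (𝓝 0)) :
    Tendsto (wronskian a u v) cofinite (𝓝 0) := by
  have hshift : Tendsto (· + 1 : ℤ → ℤ) cofinite cofinite :=
    (add_left_injective (1 : ℤ)).tendsto_cofinite
  have hcross : Tendsto (fun m => u (m + 1) * v m - u m * v (m + 1)) cofinite (𝓝 0) := by
    simpa using ((hu.comp hshift).mul hv).sub (hu.mul (hv.comp hshift))
  exact isBoundedUnder_le_mul_tendsto_zero ⟨C, eventually_map.2 (.of_forall ha)⟩ hcross

theorem norm_apply_single_le_opNorm {𝕜 ι : Type*} [NontriviallyNormedField 𝕜] [DecidableEq ι]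
    {p : ENNReal} [Fact (1 ≤ p)] (L : lp (fun _ : ι => 𝕜) p →L[𝕜] lp (fun _ : ι => 𝕜) p)
    (i j : ι) : ‖L (lp.single p j 1) i‖ ≤ ‖L‖ := by
  have hp : (0 : ENNReal) < p := zero_lt_one.trans_le Fact.out
  calc ‖L (lp.single p j 1) i‖
      ≤ ‖L (lp.single p j 1)‖ := lp.norm_apply_le_norm hp.ne' _ i
    _ ≤ ‖L‖ * ‖lp.single (E := fun _ => 𝕜) p j 1‖ := L.le_opNorm _
    _ = ‖L‖ := by rw [lp.norm_single hp, norm_one, mul_one]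

section JacobiOperator

variable {κ : ℝ} {a b : ℤ → ℝ} {L : lp (fun _ : ℤ => ℝ) 2 →L[ℝ] lp (fun _ : ℤ => ℝ) 2}

theorem abs_coeff_le_opNorm
    (hL : ∀ (f : lp (fun _ : ℤ => ℝ) 2) (j : ℤ),
      L f j = Real.cosh κ * f j - (a j * f (j + 1) + a (j - 1) * f (j - 1) + b j * f j))
    (m : ℤ) : |a m| ≤ ‖L‖ := by
  have hentry : L (lp.single 2 (m + 1) 1) m = -a m := by
    simp [hL, show m - 1 ≠ m + 1 by omega]
  simpa [hentry] using norm_apply_single_le_opNorm L m (m + 1)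

theorem jacobiExpr_rightInverse_single
    (hL : ∀ (f : lp (fun _ : ℤ => ℝ) 2) (j : ℤ),
      L f j = Real.cosh κ * f j - (a j * f (j + 1) + a (j - 1) * f (j - 1) + b j * f j))
    {R : lp (fun _ : ℤ => ℝ) 2 →L[ℝ] lp (fun _ : ℤ => ℝ) 2} (hLR : L * R = 1) (k m : ℤ) :
    jacobiExpr (Real.cosh κ) a b (fun i => R (lp.single 2 k 1) i) m = if m = k then 1 else 0 := by
  have hRk : L (R (lp.single 2 k 1)) = lp.single 2 k 1 := by
    simpa using DFunLike.congr_fun hLR (lp.single 2 k 1)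
  have h := hL (R (lp.single 2 k 1)) m
  rw [hRk] at h
  simp [jacobiExpr, ← h, Pi.single_apply]

end JacobiOperator

theorem jacobi_quadratic_identity_general (κ : ℝ) (a b : ℤ → ℝ)
    (L R : lp (fun _ : ℤ => ℝ) 2 →L[ℝ] lp (fun _ : ℤ => ℝ) 2)
    (hL : ∀ (f : lp (fun _ : ℤ => ℝ) 2) (j : ℤ),
      L f j = Real.cosh κ * f j - (a j * f (j + 1) + a (j - 1) * f (j - 1) + b j * f j))
    (hR2 : L * R = 1)
    (G : ℤ → ℤ → ℝ) (hG : ∀ i j : ℤ, G i j = R (lp.single 2 j 1) i)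
    (hsymm : ∀ i j : ℤ, G i j = G j i)
    (hdecay : ∀ n : ℤ, Filter.Tendsto (fun m => G n m) Filter.cofinite (nhds 0)) :
    ∀ n : ℤ, G n (n + 1) * (1 + a n * G n (n + 1)) = a n * G n n * G (n + 1) (n + 1) := by
  intro n
  have hcol : ∀ k m, jacobiExpr (Real.cosh κ) a b (fun i => G i k) m = if m = k then 1 else 0 :=
    fun k m => by simpa only [hG] using jacobiExpr_rightInverse_single hL hR2 k m
  set u : ℤ → ℝ := fun m => G n m
  set v : ℤ → ℝ := fun m => G m (n + 1)
  have hu : u = fun i => G i n := funext fun m => hsymm n m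
  have hjump : ∀ m, wronskian a u v m - wronskian a u v (m - 1) =
      (if m = n + 1 then 1 else 0) * u m - (if m = n then 1 else 0) * v m := fun m => by
    rw [wronskian_sub_wronskian_sub_one (Real.cosh κ) a b, hcol, hu, hcol]
  have hW : wronskian a u v (n + 1) = 0 := by
    refine eq_zero_of_tendsto_atTop_of_forall_eq_sub_one (fun m hm => ?_) ?_
    · rw [← sub_eq_zero, hjump m, if_neg hm.ne', if_neg (by omega)]
      ring
    · refine (tendsto_wronskian_cofinite (abs_coeff_le_opNorm hL) (hdecay n) ?_).mono_left ?_
      · simpa only [v, hsymm _ (n + 1)] using hdecay (n + 1)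
      · exact Int.cofinite_eq ▸ le_sup_right
  have hn := hjump (n + 1)
  rw [hW, if_pos rfl, if_neg (by omega), add_sub_cancel_right] at hn
  simp only [wronskian, u, v] at hn
  linear_combination -hn

/-- For an invertible tridiagonal Jacobi operator
`(Lf)_n = cosh(κ)f_n − (a_n f_{n+1} + a_{n-1} f_{n-1} + b_n f_n)` on `ℓ²(ℤ)` with
`a_n > 0`, whose (symmetric) Green's function `G(n,m) = ⟨δ_n, L⁻¹δ_m⟩` tends to `0`
as `|m| → ∞` for each fixed `n`, the quadratic identity
`G(n,n+1)[1 + a_n G(n,n+1)] = a_n G(n,n) G(n+1,n+1)` holds for all `n`. -/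
theorem jacobi_quadratic_identity (κ : ℝ) (a b : ℤ → ℝ) (ha : ∀ n, 0 < a n)
    (L R : lp (fun _ : ℤ => ℝ) 2 →L[ℝ] lp (fun _ : ℤ => ℝ) 2)
    (hL : ∀ (f : lp (fun _ : ℤ => ℝ) 2) (j : ℤ),
      L f j = Real.cosh κ * f j - (a j * f (j + 1) + a (j - 1) * f (j - 1) + b j * f j))
    (hR1 : R * L = 1) (hR2 : L * R = 1)
    (G : ℤ → ℤ → ℝ) (hG : ∀ i j : ℤ, G i j = R (lp.single 2 j 1) i)
    (hsymm : ∀ i j : ℤ, G i j = G j i)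
    (hdecay : ∀ n : ℤ, Filter.Tendsto (fun m => G n m) Filter.cofinite (nhds 0)) :
    ∀ n : ℤ, G n (n + 1) * (1 + a n * G n (n + 1)) = a n * G n n * G (n + 1) (n + 1) :=
  jacobi_quadratic_identity_general κ a b L R hL hR2 G hG hsymm hdecay
end

section
/- Under the same assumptions as the quadratic identity (invertible Jacobi operator with decaying Green's function), for all n, k ∈ ℤ: G(n+1,k)/G(n+1,n) = G(n,k)/G(n,n) · [1 + (a_n G(n,n+1))^{-1} 𝟙_{k>n}], provided G(n,n), G(n+1,n), and a_n G(n,n+1) are nonzero. -/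
/-!
Let `w` be the `n`-th column of the Green's function. Its restriction `t` to the half-line
`j > n` is still in `ℓ²`, and since `w` solves the homogeneous Jacobi equation away from `n`,
the Jacobi expression of `t` vanishes except at `n` and `n + 1`, where it equals `-aₙ w(n+1)`
and `aₙ w(n)`. Hence `t = R (L t) = aₙ (w(n) G(·, n+1) - w(n+1) G(·, n))`, i.e.
`𝟙_{k>n} G(k,n) = aₙ (G(n,n) G(k,n+1) - G(n+1,n) G(k,n))`. By symmetry of `G` this is the
ratio identity after clearing denominators.
-/

local notation "ℓ²(ℤ)" => lp (fun _ : ℤ => ℝ) 2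

noncomputable def jacobi (κ : ℝ) (a b f : ℤ → ℝ) (j : ℤ) : ℝ :=
  Real.cosh κ * f j - (a j * f (j + 1) + a (j - 1) * f (j - 1) + b j * f j)

theorem jacobi_indicator_Ioi {κ : ℝ} {a b w : ℤ → ℝ} {n : ℤ}
    (hw : ∀ j, n < j → jacobi κ a b w j = 0) :
    jacobi κ a b ((Set.Ioi n).indicator w) =
      a n • (w n • Pi.single (n + 1) 1 - w (n + 1) • Pi.single n 1) := by
  funext j
  simp only [jacobi, Set.indicator_apply, Set.mem_Ioi, Pi.smul_apply, Pi.sub_apply,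
    Pi.single_apply, smul_eq_mul]
  rcases lt_trichotomy j n with h | rfl | h
  · split_ifs <;> first | omega | ring
  · split_ifs <;> first | omega | ring
  · have hwj := hw j h
    rw [jacobi] at hwj
    obtain rfl | h' := (Int.add_one_le_iff.mpr h).eq_or_lt
    · rw [add_sub_cancel_right] at hwj ⊢
      split_ifs <;> first | omega | linarith
    · split_ifs <;> first | omega | linarith

theorem Memℓp.indicator {α E : Type*} [NormedAddCommGroup E] {p : ENNReal} {f : α → E}
    (hf : Memℓp f p) (s : Set α) : Memℓp (s.indicator f) p :=
  hf.mono' fun i => norm_indicator_le_norm_self f i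

section GreenFunction

variable {κ : ℝ} {a b : ℤ → ℝ} {L R : ℓ²(ℤ) →L[ℝ] ℓ²(ℤ)}

theorem jacobi_green_column (hL : ∀ f j, L f j = jacobi κ a b f j) (hLR : L * R = 1) (m : ℤ) :
    jacobi κ a b (R (lp.single 2 m 1)) = Pi.single m 1 := by
  funext j
  rw [← hL]
  exact congrArg (fun f : ℓ²(ℤ) => f j) (DFunLike.congr_fun hLR (lp.single 2 m 1))

theorem green_column_indicator_Ioi (hL : ∀ f j, L f j = jacobi κ a b f j) (hRL : R * L = 1)
    (hLR : L * R = 1) (n k : ℤ) :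
    (Set.Ioi n).indicator (R (lp.single 2 n 1)) k =
      a n * (R (lp.single 2 n 1) n * R (lp.single 2 (n + 1) 1) k -
        R (lp.single 2 n 1) (n + 1) * R (lp.single 2 n 1) k) := by
  set w := R (lp.single 2 n 1)
  let t : ℓ²(ℤ) := ⟨(Set.Ioi n).indicator w, (lp.memℓp w).indicator _⟩
  have hLt : L t = a n • (w n • lp.single 2 (n + 1) 1 - w (n + 1) • lp.single 2 n 1) := by
    refine lp.ext ?_
    rw [show ⇑(L t) = jacobi κ a b t from funext (hL t)]
    refine jacobi_indicator_Ioi fun j hj => ?_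
    rw [jacobi_green_column hL hLR, Pi.single_eq_of_ne hj.ne']
  have ht : R (L t) = t := DFunLike.congr_fun hRL t
  have htk := congrArg (fun f : ℓ²(ℤ) => f k) ht
  rw [hLt] at htk
  simpa only [map_smul, map_sub, lp.coeFn_smul, lp.coeFn_sub, Pi.smul_apply, Pi.sub_apply,
    smul_eq_mul] using htk.symm

end GreenFunction

theorem jacobi_ratio_identity_general (κ : ℝ) (a b : ℤ → ℝ)
    (L R : lp (fun _ : ℤ => ℝ) 2 →L[ℝ] lp (fun _ : ℤ => ℝ) 2)
    (hL : ∀ (f : lp (fun _ : ℤ => ℝ) 2) (j : ℤ),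
      L f j = Real.cosh κ * f j - (a j * f (j + 1) + a (j - 1) * f (j - 1) + b j * f j))
    (hR1 : R * L = 1) (hR2 : L * R = 1)
    (G : ℤ → ℤ → ℝ) (hG : ∀ i j : ℤ, G i j = R (lp.single 2 j 1) i)
    (hsymm : ∀ i j : ℤ, G i j = G j i) :
    ∀ n k : ℤ, G n n ≠ 0 → G (n + 1) n ≠ 0 → a n * G n (n + 1) ≠ 0 →
      G (n + 1) k / G (n + 1) n =
        G n k / G n n * (1 + (a n * G n (n + 1))⁻¹ * (if n < k then (1 : ℝ) else 0)) := by
  intro n k hGnn hGn1n hanG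
  have hcol := green_column_indicator_Ioi hL hR1 hR2 n k
  simp only [← hG, Set.indicator_apply, Set.mem_Ioi] at hcol
  have han : a n ≠ 0 := left_ne_zero_of_mul hanG
  rw [hsymm (n + 1) k, hsymm n k, hsymm n (n + 1)]
  field_simp
  split_ifs at hcol ⊢ <;> linear_combination -hcol

/-- For an invertible Jacobi operator with decaying symmetric Green's function `G`,
for all `n, k`: `G(n+1,k)/G(n+1,n) = G(n,k)/G(n,n) · [1 + (a_n G(n,n+1))⁻¹ 𝟙_{k>n}]`,
provided `G(n,n)`, `G(n+1,n)`, and `a_n G(n,n+1)` are nonzero. -/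
theorem jacobi_ratio_identity (κ : ℝ) (a b : ℤ → ℝ) (ha : ∀ n, 0 < a n)
    (L R : lp (fun _ : ℤ => ℝ) 2 →L[ℝ] lp (fun _ : ℤ => ℝ) 2)
    (hL : ∀ (f : lp (fun _ : ℤ => ℝ) 2) (j : ℤ),
      L f j = Real.cosh κ * f j - (a j * f (j + 1) + a (j - 1) * f (j - 1) + b j * f j))
    (hR1 : R * L = 1) (hR2 : L * R = 1)
    (G : ℤ → ℤ → ℝ) (hG : ∀ i j : ℤ, G i j = R (lp.single 2 j 1) i)
    (hsymm : ∀ i j : ℤ, G i j = G j i)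
    (hdecay : ∀ n : ℤ, Filter.Tendsto (fun m => G n m) Filter.cofinite (nhds 0)) :
    ∀ n k : ℤ, G n n ≠ 0 → G (n + 1) n ≠ 0 → a n * G n (n + 1) ≠ 0 →
      G (n + 1) k / G (n + 1) n =
        G n k / G n n * (1 + (a n * G n (n + 1))⁻¹ * (if n < k then (1 : ℝ) else 0)) :=
  jacobi_ratio_identity_general κ a b L R hL hR1 hR2 G hG hsymm
end

section
/- Under the same assumptions (invertible Jacobi operator, decaying symmetric Green's function, nondegenerate entries), if k ≤ n < ℓ then G(k,ℓ) = G(k,n+1)·G(n,ℓ)/G(n+1,n). -/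
/-!
For two columns `u = G(·, p)`, `v = G(·, q)` of the Green's function, the discrete Wronskian
`W m = a m * (u (m+1) * v m - u m * v (m+1))` jumps only where the right-hand sides `δ_p`, `δ_q`
are supported: `W m - W (m-1) = u m * δ_q m - v m * δ_p m` (Lagrange identity). Columns lie in
`ℓ²` and `a` is bounded by `‖L‖`, so `W → 0` at `-∞`; hence `W = 0` left of `min p q` and
`W = -G(p, q)` on `[p, q)`. Evaluating `W n` for the pairs `(k, l)`, `(k, n+1)` and `(n+1, l)`
gives three relations whose linear combination is the splitting identity.
-/

open Filter Topology

theorem Memℓp.tendsto_norm_cofinite_zero {α : Type*} {E : α → Type*}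
    [∀ i, NormedAddCommGroup (E i)] {p : ENNReal} {f : ∀ i, E i} (hf : Memℓp f p)
    (hp : 0 < p.toReal) :
    Tendsto (fun i => ‖f i‖) cofinite (𝓝 0) := by
  have h := (hf.summable hp).tendsto_cofinite_zero.rpow_const (p := p.toReal⁻¹)
    (Or.inr (by positivity))
  simpa [Real.rpow_rpow_inv (norm_nonneg _) hp.ne', Real.zero_rpow (inv_ne_zero hp.ne')] using h

theorem Int.eq_of_forall_eq_sub_one {α : Type*} {F : ℤ → α} {p q : ℤ} (hpq : p ≤ q)
    (h : ∀ m, p < m → m ≤ q → F m = F (m - 1)) : F q = F p := by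
  induction q, hpq using Int.leInduction with
  | base => rfl
  | succ r hpr ih =>
    rw [h (r + 1) (by omega) le_rfl, add_sub_cancel_right]
    exact ih fun m hpm hmr => h m hpm (by omega)

theorem Int.eq_of_tendsto_atBot_of_forall_eq_sub_one {α : Type*} [TopologicalSpace α] [T2Space α]
    {F : ℤ → α} {x : α} {q : ℤ} (hF : Tendsto F atBot (𝓝 x))
    (h : ∀ m ≤ q, F m = F (m - 1)) : F q = x := by
  have hconst : ∀ᶠ m in atBot, F q = F m :=
    eventually_atBot.2 ⟨q, fun m hm => Int.eq_of_forall_eq_sub_one hm fun j _ hj => h j hj⟩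
  exact tendsto_nhds_unique (tendsto_const_nhds.congr' hconst) hF

namespace Jacobi

def op (c : ℝ) (a b u : ℤ → ℝ) (j : ℤ) : ℝ :=
  c * u j - (a j * u (j + 1) + a (j - 1) * u (j - 1) + b j * u j)

/-- With `u = G(·, n)`, `v = G(·, k)` and a symmetric `G`, this is the paper's `I_m`. -/
def wronskian (a u v : ℤ → ℝ) (m : ℤ) : ℝ :=
  a m * (u (m + 1) * v m - u m * v (m + 1))

variable {c C : ℝ} {a b : ℤ → ℝ}

theorem wronskian_sub_wronskian_sub_one {u v : ℤ → ℝ} (m : ℤ) :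
    wronskian a u v m - wronskian a u v (m - 1) = u m * op c a b v m - v m * op c a b u m := by
  simp only [wronskian, op, sub_add_cancel]
  ring

theorem tendsto_wronskian_atBot {u v : ℤ → ℝ} (ha : ∀ j, |a j| ≤ C)
    (hu : Tendsto u atBot (𝓝 0)) (hv : Tendsto v atBot (𝓝 0)) :
    Tendsto (wronskian a u v) atBot (𝓝 0) := by
  have hshift {w : ℤ → ℝ} (hw : Tendsto w atBot (𝓝 0)) :
      Tendsto (fun m => w (m + 1)) atBot (𝓝 0) :=
    hw.comp (tendsto_atBot_add_const_right _ 1 tendsto_id)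
  have h := ((hshift hu).mul hv).sub (hu.mul (hshift hv))
  rw [mul_zero, sub_zero] at h
  exact bdd_le_mul_tendsto_zero' C (Eventually.of_forall ha) h

section Green

variable {G : ℤ → ℤ → ℝ} (hG : ∀ p, op c a b (G · p) = Pi.single p 1)
  (hdecay : ∀ p, Tendsto (G · p) atBot (𝓝 0)) (ha : ∀ j, |a j| ≤ C)
include hG

theorem green_wronskian_sub_wronskian_sub_one (p q m : ℤ) :
    wronskian a (G · p) (G · q) m - wronskian a (G · p) (G · q) (m - 1) =
      G m p * (Pi.single q 1 : ℤ → ℝ) m - G m q * (Pi.single p 1 : ℤ → ℝ) m := by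
  rw [wronskian_sub_wronskian_sub_one (c := c) (b := b), hG, hG]

include hdecay ha

theorem green_wronskian_eq_zero {p q m : ℤ} (hp : m < p) (hq : m < q) :
    wronskian a (G · p) (G · q) m = 0 :=
  Int.eq_of_tendsto_atBot_of_forall_eq_sub_one
    (tendsto_wronskian_atBot ha (hdecay p) (hdecay q)) fun j hj => by
    have := green_wronskian_sub_wronskian_sub_one hG p q j
    simp only [Pi.single_apply, if_neg (by omega : j ≠ p), if_neg (by omega : j ≠ q)] at this
    linarith

theorem green_wronskian_eq_neg {p q m : ℤ} (hpm : p ≤ m) (hmq : m < q) :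
    wronskian a (G · p) (G · q) m = -G p q := by
  have hconst : wronskian a (G · p) (G · q) m = wronskian a (G · p) (G · q) p :=
    Int.eq_of_forall_eq_sub_one hpm fun j hpj hjm => by
      have := green_wronskian_sub_wronskian_sub_one hG p q j
      simp only [Pi.single_apply, if_neg (by omega : j ≠ p), if_neg (by omega : j ≠ q)] at this
      linarith
  have hjump := green_wronskian_sub_wronskian_sub_one hG p q p
  simp only [Pi.single_apply, if_neg (by omega : p ≠ q), if_true] at hjump
  rw [green_wronskian_eq_zero hG hdecay ha (by omega : p - 1 < p) (by omega)] at hjump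
  linarith

theorem green_mul_green_eq {k n l : ℤ} (hkn : k ≤ n) (hnl : n < l) :
    G k l * G n (n + 1) = G k (n + 1) * G n l := by
  have hkl := green_wronskian_eq_neg hG hdecay ha hkn hnl
  have hkn' := green_wronskian_eq_neg hG hdecay ha hkn (lt_add_one n)
  have hnl' := green_wronskian_eq_zero hG hdecay ha (lt_add_one n) hnl
  simp only [wronskian] at hkl hkn' hnl'
  linear_combination G n (n + 1) * hkl - G n l * hkn' - G n k * hnl'

end Green

section Operator

variable {c : ℝ} {a b : ℤ → ℝ} {L : lp (fun _ : ℤ => ℝ) 2 →L[ℝ] lp (fun _ : ℤ => ℝ) 2}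
  (hL : ∀ f : lp (fun _ : ℤ => ℝ) 2, ⇑(L f) = op c a b f)
include hL

theorem abs_le_opNorm (j : ℤ) : |a j| ≤ ‖L‖ := by
  set v : lp (fun _ : ℤ => ℝ) 2 := lp.single 2 (j + 1) 1
  have hv : ‖v‖ = 1 := by rw [lp.norm_single (by norm_num), norm_one]
  have hcoeff : L v j = -a j := by
    rw [hL, op, lp.coeFn_single]
    simp [show j - 1 ≠ j + 1 by omega]
  calc |a j| = ‖L v j‖ := by rw [hcoeff, norm_neg, Real.norm_eq_abs]
    _ ≤ ‖L v‖ := lp.norm_apply_le_norm two_ne_zero _ j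
    _ ≤ ‖L‖ * ‖v‖ := L.le_opNorm v
    _ = ‖L‖ := by rw [hv, mul_one]

theorem op_apply_single_of_mul_eq_one {R : lp (fun _ : ℤ => ℝ) 2 →L[ℝ] lp (fun _ : ℤ => ℝ) 2}
    (hLR : L * R = 1) (p : ℤ) : op c a b ⇑(R (lp.single 2 p 1)) = Pi.single p 1 := by
  rw [← hL]
  exact congrArg _ (DFunLike.congr_fun hLR _)

end Operator

end Jacobi

theorem jacobi_splitting_identity_general (κ : ℝ) (a b : ℤ → ℝ)
    (L R : lp (fun _ : ℤ => ℝ) 2 →L[ℝ] lp (fun _ : ℤ => ℝ) 2)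
    (hL : ∀ (f : lp (fun _ : ℤ => ℝ) 2) (j : ℤ),
      L f j = Real.cosh κ * f j - (a j * f (j + 1) + a (j - 1) * f (j - 1) + b j * f j))
    (hR2 : L * R = 1)
    (G : ℤ → ℤ → ℝ) (hG : ∀ i j : ℤ, G i j = R (lp.single 2 j 1) i)
    (hsymm : ∀ i j : ℤ, G i j = G j i) :
    ∀ n k l : ℤ, k ≤ n → n < l → G (n + 1) n ≠ 0 →
      G k l = G k (n + 1) * G n l / G (n + 1) n := by
  intro n k l hkn hnl hne
  have hL' : ∀ f, ⇑(L f) = Jacobi.op (Real.cosh κ) a b f := fun f => funext (hL f)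
  have hcol : ∀ p, (G · p) = ⇑(R (lp.single 2 p 1)) := fun p => funext fun i => hG i p
  have hsplit := Jacobi.green_mul_green_eq (G := G)
    (fun p => by rw [hcol]; exact Jacobi.op_apply_single_of_mul_eq_one hL' hR2 p)
    (fun p => by
      rw [hcol, tendsto_zero_iff_norm_tendsto_zero]
      exact ((lp.memℓp _).tendsto_norm_cofinite_zero (by norm_num)).mono_left
        atBot_le_cofinite)
    (Jacobi.abs_le_opNorm hL') hkn hnl
  rw [hsymm (n + 1) n] at hne ⊢
  rw [eq_div_iff hne, hsplit]

/-- For an invertible Jacobi operator with decaying symmetric Green's function `G` and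
nondegenerate entries: if `k ≤ n < ℓ` then `G(k,ℓ) = G(k,n+1)·G(n,ℓ)/G(n+1,n)`. -/
theorem jacobi_splitting_identity (κ : ℝ) (a b : ℤ → ℝ) (ha : ∀ n, 0 < a n)
    (L R : lp (fun _ : ℤ => ℝ) 2 →L[ℝ] lp (fun _ : ℤ => ℝ) 2)
    (hL : ∀ (f : lp (fun _ : ℤ => ℝ) 2) (j : ℤ),
      L f j = Real.cosh κ * f j - (a j * f (j + 1) + a (j - 1) * f (j - 1) + b j * f j))
    (hR1 : R * L = 1) (hR2 : L * R = 1)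
    (G : ℤ → ℤ → ℝ) (hG : ∀ i j : ℤ, G i j = R (lp.single 2 j 1) i)
    (hsymm : ∀ i j : ℤ, G i j = G j i)
    (hdecay : ∀ n : ℤ, Filter.Tendsto (fun m => G n m) Filter.cofinite (nhds 0)) :
    ∀ n k l : ℤ, k ≤ n → n < l → G (n + 1) n ≠ 0 →
      G k l = G k (n + 1) * G n l / G (n + 1) n :=
  jacobi_splitting_identity_general κ a b L R hL hR2 G hG hsymm
end

section
/- Let L be the tridiagonal operator (Lf)_m = cosh(κ)f_m − (a_m f_{m+1} + a_{m-1} f_{m-1} ∓ b_m f_m) on ℓ²(ℤ) with a_m > 0. Suppose cosh(κ) > 1 + sup_m |b_m| + sup_m |2a_m − 1|, L is invertible, and for each fixed n the sequence m ↦ G(m,n) = ⟨δ_m, L^{-1}δ_n⟩ tends to 0 as m → ±∞. Then G(n,m) > 0 for all n, m ∈ ℤ. -/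
/-- For the Toda Lax operator
`(Lf)_m = cosh(κ)f_m − (a_m f_{m+1} + a_{m-1} f_{m-1} ∓ b_m f_m)` (sign `ε = ∓1`)
on `ℓ²(ℤ)` with `a_m > 0`, if `cosh(κ) > 1 + sup_m |b_m| + sup_m |2a_m − 1|`, `L` is
invertible, and `G(·,n)` decays at `±∞` for each `n`, then `G(n,m) > 0` for all `n, m`. -/
theorem jacobi_greens_function_positive (κ : ℝ) (a b : ℤ → ℝ) (ha : ∀ m, 0 < a m)
    (ε : ℝ) (hε : ε = 1 ∨ ε = -1)
    (Cb Ca : ℝ) (hb : ∀ m, |b m| ≤ Cb) (ha2 : ∀ m, |2 * a m - 1| ≤ Ca)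
    (hcosh : 1 + Cb + Ca < Real.cosh κ)
    (L R : lp (fun _ : ℤ => ℝ) 2 →L[ℝ] lp (fun _ : ℤ => ℝ) 2)
    (hL : ∀ (f : lp (fun _ : ℤ => ℝ) 2) (m : ℤ),
      L f m = Real.cosh κ * f m
        - (a m * f (m + 1) + a (m - 1) * f (m - 1) + ε * b m * f m))
    (hR1 : R * L = 1) (hR2 : L * R = 1)
    (G : ℤ → ℤ → ℝ) (hG : ∀ i j : ℤ, G i j = R (lp.single 2 j 1) i)
    (hdecay : ∀ n : ℤ, Filter.Tendsto (fun m => G m n) Filter.cofinite (nhds 0)) :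
    ∀ n m : ℤ, 0 < G n m := by
  intro n j
  set f : ℤ → ℝ := fun i => G i j with hf
  -- coefficient bounds
  have hεb : ∀ i : ℤ, |ε * b i| ≤ Cb := by
    intro i
    rcases hε with h | h <;> rw [h] <;> simpa [abs_mul] using hb i
  have hc : ∀ i : ℤ, a i + a (i - 1) < Real.cosh κ - ε * b i := by
    intro i
    have h2 := (abs_le.mp (ha2 i)).2
    have h3 := (abs_le.mp (ha2 (i - 1))).2
    have h4 := (abs_le.mp (hεb i)).2
    linarith
  have hcpos : ∀ i : ℤ, 0 < Real.cosh κ - ε * b i := by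
    intro i
    have := hc i
    have := (ha i).le
    have := (ha (i - 1)).le
    linarith
  -- the difference equation for f
  have heq : ∀ i : ℤ, Real.cosh κ * f i
      - (a i * f (i + 1) + a (i - 1) * f (i - 1) + ε * b i * f i)
      = if i = j then 1 else 0 := by
    intro i
    have h1 := DFunLike.congr_fun hR2 (lp.single 2 j (1 : ℝ))
    simp only [ContinuousLinearMap.mul_apply, ContinuousLinearMap.one_apply] at h1
    have h2 := hL (R (lp.single 2 j 1)) i
    rw [h1] at h2
    have h3 : (lp.single 2 j (1 : ℝ) : lp (fun _ : ℤ => ℝ) 2) i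
        = if i = j then 1 else 0 := by
      by_cases hij : i = j
      · subst hij; simp [lp.single_apply_self]
      · simp [lp.single_apply_ne _ _ _ hij, hij]
    have h4 : ∀ k : ℤ, f k = R (lp.single 2 j 1) k := fun k => hG k j
    rw [h4 i, h4 (i + 1), h4 (i - 1), ← h2, h3]
  -- nonnegativity by the minimum principle
  have hnonneg : ∀ i : ℤ, 0 ≤ f i := by
    by_contra hcon
    push_neg at hcon
    obtain ⟨m0, hm0⟩ := hcon
    have hmem : (fun m => G m j) ⁻¹' {x : ℝ | f m0 / 2 < x} ∈ (Filter.cofinite : Filter ℤ) :=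
      hdecay j (Ioi_mem_nhds (by linarith))
    rw [Filter.mem_cofinite] at hmem
    have hfin : {i : ℤ | f i ≤ f m0 / 2}.Finite := by
      refine hmem.subset fun i hi => ?_
      simp only [Set.mem_compl_iff, Set.mem_preimage, Set.mem_setOf_eq] at *
      intro h; exact absurd h (not_lt.mpr hi)
    have hm0mem : m0 ∈ hfin.toFinset := by
      rw [Set.Finite.mem_toFinset]; simp only [Set.mem_setOf_eq]; linarith
    obtain ⟨ms, hms, hmin'⟩ := hfin.toFinset.exists_min_image f ⟨m0, hm0mem⟩
    rw [Set.Finite.mem_toFinset] at hms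
    have hmsle : f ms ≤ f m0 := hmin' m0 hm0mem
    have hmin : ∀ i : ℤ, f ms ≤ f i := by
      intro i
      by_cases hi : i ∈ hfin.toFinset
      · exact hmin' i hi
      · rw [Set.Finite.mem_toFinset, Set.mem_setOf_eq, not_le] at hi
        linarith
    have hstar : f ms < 0 := by linarith
    have h := heq ms
    have e1 : a ms * f ms ≤ a ms * f (ms + 1) :=
      mul_le_mul_of_nonneg_left (hmin _) (ha ms).le
    have e2 : a (ms - 1) * f ms ≤ a (ms - 1) * f (ms - 1) :=
      mul_le_mul_of_nonneg_left (hmin _) (ha (ms - 1)).le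
    have hδ : (0 : ℝ) ≤ if ms = j then (1 : ℝ) else 0 := by positivity
    have hp : 0 < (Real.cosh κ - ε * b ms - (a ms + a (ms - 1))) * (-f ms) :=
      mul_pos (by linarith [hc ms]) (by linarith)
    nlinarith [h, e1, e2, hδ, hp]
  -- strict positivity at the diagonal
  have hfj : 0 < f j := by
    have h := heq j
    rw [if_pos rfl] at h
    have d1 : 0 ≤ a j * f (j + 1) := mul_nonneg (ha j).le (hnonneg _)
    have d2 : 0 ≤ a (j - 1) * f (j - 1) := mul_nonneg (ha (j - 1)).le (hnonneg _)
    by_contra h0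
    push_neg at h0
    have hfj0 : f j = 0 := le_antisymm h0 (hnonneg j)
    rw [hfj0] at h
    nlinarith
  -- zeros propagate
  have hzero : ∀ i : ℤ, f i = 0 → f (i + 1) = 0 ∧ f (i - 1) = 0 := by
    intro i h0
    have hi := heq i
    rw [h0] at hi
    have d1 : 0 ≤ a i * f (i + 1) := mul_nonneg (ha i).le (hnonneg _)
    have d2 : 0 ≤ a (i - 1) * f (i - 1) := mul_nonneg (ha (i - 1)).le (hnonneg _)
    have key : a i * f (i + 1) = 0 ∧ a (i - 1) * f (i - 1) = 0 := by
      constructor <;> (split_ifs at hi <;> linarith)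
    constructor
    · rcases mul_eq_zero.mp key.1 with h | h
      · exact absurd h (ha i).ne'
      · exact h
    · rcases mul_eq_zero.mp key.2 with h | h
      · exact absurd h (ha (i - 1)).ne'
      · exact h
  have hspread : ∀ k : ℕ, ∀ i : ℤ, f i = 0 → f (i + k) = 0 ∧ f (i - k) = 0 := by
    intro k
    induction k with
    | zero => intro i h; constructor <;> simpa using h
    | succ k ih =>
      intro i h
      obtain ⟨h1, h2⟩ := hzero i h
      obtain ⟨h3, -⟩ := ih (i + 1) h1
      obtain ⟨-, h4⟩ := ih (i - 1) h2
      constructor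
      · have hk : i + ((k + 1 : ℕ) : ℤ) = (i + 1) + (k : ℤ) := by push_cast; ring
        rw [hk]; exact h3
      · have hk : i - ((k + 1 : ℕ) : ℤ) = (i - 1) - (k : ℤ) := by push_cast; ring
        rw [hk]; exact h4
  -- conclude
  show 0 < f n
  rcases lt_or_eq_of_le (hnonneg n) with h | h
  · exact h
  · exfalso
    have h0 : f n = 0 := h.symm
    have hk : j = n + ((j - n).natAbs : ℤ) ∨ j = n - ((j - n).natAbs : ℤ) := by omega
    obtain ⟨h3, h4⟩ := hspread (j - n).natAbs n h0
    rcases hk with hk | hk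
    · rw [hk] at hfj; exact absurd h3 (by linarith)
    · rw [hk] at hfj; exact absurd h4 (by linarith)
end

section
/- Let 𝐋 = [[z − S, α],[β, z^{-1} − S]] on ℓ²(ℤ)⊕ℓ²(ℤ) with |z| ≥ 2 and α, β ∈ ℓ²(ℤ) sufficiently small, so that 𝐋 is invertible with matrix-valued Green's function G(n,m;z). Then det G(n,m) = 0 for all n, m ∈ ℤ, i.e., G₁₁(n,m)G₂₂(n,m) − G₁₂(n,m)G₂₁(n,m) = 0. -/
/-!
Write `(𝐋 f)ₙ = T n fₙ - fₙ₊₁` with `T n = !![z, α n; β n, z⁻¹]`. Then `𝐋 G = 1` and `G 𝐋 = 1`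
become `G (n+1) m = T n * G n m - δₙₘ` and `G n (m-1) = G n m * T m - δₙₘ`. Off the diagonal,
`det G (·) m` is multiplied by `det T n = 1 - αₙ βₙ` at each step; since `∑ |αₙ βₙ| < ∞` the
partial products are bounded (and so are their inverses far to the right), so decay forces
`det G n m = 0` for `n ≤ m`. On the diagonal,
`det G (m+1) m = det (T m) * det G m m - tr (T m * G m m) + 1`, and the two recursions give
`T m * G m m = G (m+1) (m+1) * T (m+1)`, so `tr (T m * G m m)` does not depend on `m`. Running the
argument far to the right, where `det T ≠ 0`, shows that this trace is `1`; hence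
`det G (m+1) m = 0`, and the recursion carries the zero to all `n > m`.
-/

open Filter Topology

theorem norm_le_prod_norm_mul_of_eq_mul_succ {R : Type*} [SeminormedRing R] {D c : ℕ → R}
    (hD : ∀ k, D k = c k * D (k + 1)) (k : ℕ) :
    ‖D 0‖ ≤ (∏ i ∈ Finset.range k, ‖c i‖) * ‖D k‖ := by
  induction k with
  | zero => simp
  | succ k ih =>
    calc ‖D 0‖ ≤ (∏ i ∈ Finset.range k, ‖c i‖) * ‖D k‖ := ih
      _ ≤ (∏ i ∈ Finset.range k, ‖c i‖) * (‖c k‖ * ‖D (k + 1)‖) := by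
        rw [hD k]; gcongr; exact norm_mul_le _ _
      _ = _ := by rw [Finset.prod_range_succ, mul_assoc]

theorem prod_norm_le_exp_tsum {R : Type*} [SeminormedRing R] [NormOneClass R] {c : ℕ → R}
    (hc : Summable fun k => ‖c k - 1‖) (k : ℕ) :
    ∏ i ∈ Finset.range k, ‖c i‖ ≤ Real.exp (∑' i, ‖c i - 1‖) :=
  calc ∏ i ∈ Finset.range k, ‖c i‖ ≤ ∏ i ∈ Finset.range k, (1 + ‖c i - 1‖) := by
        gcongr with i
        simpa using norm_le_norm_add_norm_sub' (c i) 1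
    _ ≤ Real.exp (∑ i ∈ Finset.range k, ‖c i - 1‖) :=
        Real.prod_one_add_le_exp_sum _ fun _ => norm_nonneg _
    _ ≤ Real.exp (∑' i, ‖c i - 1‖) :=
        Real.exp_le_exp.mpr (hc.sum_le_tsum _ fun i _ => norm_nonneg _)

theorem eq_zero_of_eq_mul_succ_of_tendsto {R : Type*} [NormedRing R] [NormOneClass R]
    {D c : ℕ → R} (hc : Summable fun k => ‖c k - 1‖) (hD : ∀ k, D k = c k * D (k + 1))
    (hlim : Tendsto D atTop (𝓝 0)) : D 0 = 0 := by
  have hbound (k : ℕ) : ‖D 0‖ ≤ Real.exp (∑' i, ‖c i - 1‖) * ‖D k‖ :=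
    (norm_le_prod_norm_mul_of_eq_mul_succ hD k).trans
      (by gcongr; exact prod_norm_le_exp_tsum hc k)
  have hlim' : Tendsto (fun k => Real.exp (∑' i, ‖c i - 1‖) * ‖D k‖) atTop (𝓝 0) := by
    simpa using hlim.norm.const_mul (Real.exp (∑' i, ‖c i - 1‖))
  exact norm_le_zero_iff.mp (ge_of_tendsto' hlim' hbound)

theorem Int.eq_zero_of_tendsto_atBot_of_eq_mul {R : Type*} [NormedRing R] [NormOneClass R]
    {D a : ℤ → R} {m : ℤ} (ha : Summable fun n => ‖a n - 1‖)
    (hD : ∀ n < m, D (n + 1) = a n * D n) (hlim : Tendsto D atBot (𝓝 0)) {n : ℤ} (hn : n ≤ m) :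
    D n = 0 := by
  have hinj : Function.Injective fun k : ℕ => n - k - 1 := fun _ _ h => by simpa using h
  have hshift : Tendsto (fun k : ℕ => n - k) atTop atBot :=
    tendsto_atBot_add_const_left _ n (tendsto_neg_atTop_atBot.comp tendsto_natCast_atTop_atTop)
  simpa using eq_zero_of_eq_mul_succ_of_tendsto (D := fun k : ℕ => D (n - k))
    (ha.comp_injective hinj)
    (fun k => by simpa [sub_add_eq_sub_sub] using hD (n - k - 1) (by omega))
    (hlim.comp hshift)

theorem summable_norm_inv_sub_one {ι 𝕜 : Type*} [NormedDivisionRing 𝕜] {a : ι → 𝕜}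
    (ha : Summable fun i => ‖a i - 1‖) : Summable fun i => ‖(a i)⁻¹ - 1‖ := by
  refine Summable.of_norm_bounded_eventually (ha.mul_left 2) ?_
  filter_upwards [ha.tendsto_cofinite_zero.eventually (gt_mem_nhds (one_half_pos (α := ℝ)))]
    with i hi
  have hai : 1 / 2 ≤ ‖a i‖ := by
    have := norm_sub_norm_le (1 : 𝕜) (a i)
    rw [norm_one, norm_sub_rev] at this
    linarith
  have hne : a i ≠ 0 := norm_pos_iff.mp (by linarith)
  calc ‖‖(a i)⁻¹ - 1‖‖ = ‖a i - 1‖ / ‖a i‖ := by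
        rw [norm_norm, ← norm_div, sub_div, div_self hne, one_div, ← norm_neg, neg_sub]
    _ ≤ 2 * ‖a i - 1‖ := by
        rw [div_le_iff₀ (by linarith)]; nlinarith [norm_nonneg (a i - 1)]

theorem Int.eq_zero_of_tendsto_atTop_of_eq_mul {𝕜 : Type*} [NormedDivisionRing 𝕜]
    {D a : ℤ → 𝕜} {m : ℤ} (ha : Summable fun n => ‖a n - 1‖) (ha₀ : ∀ n ≥ m, a n ≠ 0)
    (hD : ∀ n ≥ m, D (n + 1) = a n * D n) (hlim : Tendsto D atTop (𝓝 0)) {n : ℤ} (hn : m ≤ n) :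
    D n = 0 := by
  have hinj : Function.Injective fun k : ℕ => n + k := fun _ _ h => by simpa using h
  have hshift : Tendsto (fun k : ℕ => n + k) atTop atTop :=
    tendsto_atTop_add_const_left _ n tendsto_natCast_atTop_atTop
  simpa using eq_zero_of_eq_mul_succ_of_tendsto (D := fun k : ℕ => D (n + k))
    ((summable_norm_inv_sub_one ha).comp_injective hinj)
    (fun k => by
      rw [Nat.cast_succ, ← add_assoc, hD _ (by omega), inv_mul_cancel_left₀ (ha₀ _ (by omega))])
    (hlim.comp hshift)

theorem Matrix.det_sub_one_fin_two {R : Type*} [CommRing R] (A : Matrix (Fin 2) (Fin 2) R) :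
    (A - 1).det = A.det - A.trace + 1 := by
  simp [Matrix.det_fin_two, Matrix.trace_fin_two]; ring

section GreenKernel

variable {𝕜 : Type*} [NormedField 𝕜] {T : ℤ → Matrix (Fin 2) (Fin 2) 𝕜}
  {G : ℤ → ℤ → Matrix (Fin 2) (Fin 2) 𝕜}

theorem det_green_eq_zero_of_le (hT : Summable fun n => ‖(T n).det - 1‖)
    (hleft : ∀ n m, G (n + 1) m = T n * G n m - if n = m then 1 else 0)
    (hdecay : ∀ m, Tendsto (fun n => (G n m).det) cofinite (𝓝 0)) {n m : ℤ} (h : n ≤ m) :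
    (G n m).det = 0 :=
  Int.eq_zero_of_tendsto_atBot_of_eq_mul hT
    (fun k hk => by rw [hleft, if_neg hk.ne, sub_zero, Matrix.det_mul])
    ((hdecay m).mono_left (Int.cofinite_eq ▸ le_sup_left)) h

theorem det_green_succ_self (hleft : ∀ n m, G (n + 1) m = T n * G n m - if n = m then 1 else 0)
    (m : ℤ) : (G (m + 1) m).det = (T m).det * (G m m).det - (T m * G m m).trace + 1 := by
  rw [hleft, if_pos rfl, Matrix.det_sub_one_fin_two, Matrix.det_mul]

theorem trace_transfer_mul_green_succ
    (hleft : ∀ n m, G (n + 1) m = T n * G n m - if n = m then 1 else 0)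
    (hright : ∀ n m, G n (m - 1) = G n m * T m - if n = m then 1 else 0) (m : ℤ) :
    (T (m + 1) * G (m + 1) (m + 1)).trace = (T m * G m m).trace := by
  have h := (hleft m m).symm.trans (by simpa using hright (m + 1) (m + 1))
  rw [if_pos rfl, sub_left_inj] at h
  rw [Matrix.trace_mul_comm, h]

theorem trace_transfer_mul_green_self_eq_one (hT : Summable fun n => ‖(T n).det - 1‖)
    (hleft : ∀ n m, G (n + 1) m = T n * G n m - if n = m then 1 else 0)
    (hright : ∀ n m, G n (m - 1) = G n m * T m - if n = m then 1 else 0)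
    (hdecay : ∀ m, Tendsto (fun n => (G n m).det) cofinite (𝓝 0)) (m : ℤ) :
    (T m * G m m).trace = 1 := by
  have hT₀ : ∀ᶠ k in atTop, (T k).det ≠ 0 := by
    filter_upwards [(hT.tendsto_cofinite_zero.eventually (gt_mem_nhds one_pos)).filter_mono
      (Int.cofinite_eq ▸ le_sup_right)] with k hk hk₀
    simp [hk₀] at hk
  obtain ⟨m₀, hm₀⟩ := eventually_atTop.mp hT₀
  have hτ₀ : (T m₀ * G m₀ m₀).trace = 1 := by
    have hsucc : (G (m₀ + 1) m₀).det = 0 :=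
      Int.eq_zero_of_tendsto_atTop_of_eq_mul hT (fun k hk => hm₀ k (by omega))
        (fun k hk => by rw [hleft, if_neg (by omega), sub_zero, Matrix.det_mul])
        ((hdecay m₀).mono_left (Int.cofinite_eq ▸ le_sup_right)) le_rfl
    rwa [det_green_succ_self hleft, det_green_eq_zero_of_le hT hleft hdecay le_rfl, mul_zero,
      zero_sub, neg_add_eq_zero] at hsucc
  have hper : Function.Periodic (fun k => (T k * G k k).trace) 1 :=
    trace_transfer_mul_green_succ hleft hright
  simpa [hτ₀] using hper.int_mul (m - m₀) m₀

theorem det_green_eq_zero (hT : Summable fun n => ‖(T n).det - 1‖)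
    (hleft : ∀ n m, G (n + 1) m = T n * G n m - if n = m then 1 else 0)
    (hright : ∀ n m, G n (m - 1) = G n m * T m - if n = m then 1 else 0)
    (hdecay : ∀ m, Tendsto (fun n => (G n m).det) cofinite (𝓝 0)) (n m : ℤ) :
    (G n m).det = 0 := by
  rcases le_or_gt n m with h | h
  · exact det_green_eq_zero_of_le hT hleft hdecay h
  induction n, h using Int.leInduction with
  | base =>
    rw [det_green_succ_self hleft, det_green_eq_zero_of_le hT hleft hdecay le_rfl,
      trace_transfer_mul_green_self_eq_one hT hleft hright hdecay]
    ring
  | succ k hk ih => rw [hleft, if_neg (by omega), sub_zero, Matrix.det_mul, ih, mul_zero]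

end GreenKernel

open scoped lp

def IsAblowitzLadikLax (z : ℂ) (α β : ℓ²(ℤ, ℂ))
    (L : ℓ²(ℤ, ℂ) × ℓ²(ℤ, ℂ) →L[ℂ] ℓ²(ℤ, ℂ) × ℓ²(ℤ, ℂ)) : Prop :=
  ∀ f n, (L f).1 n = z * f.1 n - f.1 (n + 1) + α n * f.2 n ∧
    (L f).2 n = β n * f.1 n + z⁻¹ * f.2 n - f.2 (n + 1)

noncomputable def alTransferMatrix (z : ℂ) (α β : ℓ²(ℤ, ℂ)) (n : ℤ) :
    Matrix (Fin 2) (Fin 2) ℂ :=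
  !![z, α n; β n, z⁻¹]

noncomputable def greenMatrix (R : ℓ²(ℤ, ℂ) × ℓ²(ℤ, ℂ) →L[ℂ] ℓ²(ℤ, ℂ) × ℓ²(ℤ, ℂ))
    (n m : ℤ) : Matrix (Fin 2) (Fin 2) ℂ :=
  !![(R (lp.single 2 m 1, 0)).1 n, (R (0, lp.single 2 m 1)).1 n;
    (R (lp.single 2 m 1, 0)).2 n, (R (0, lp.single 2 m 1)).2 n]

theorem summable_norm_det_alTransferMatrix_sub_one {z : ℂ} (hz : z ≠ 0) (α β : ℓ²(ℤ, ℂ)) :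
    Summable fun n => ‖(alTransferMatrix z α β n).det - 1‖ := by
  have hαβ := lp.summable_mul (p := 2) (q := 2)
    (by rw [Real.holderConjugate_iff]; norm_num) α β
  simpa [alTransferMatrix, Matrix.det_fin_two_of, hz] using hαβ

namespace IsAblowitzLadikLax

variable {z : ℂ} {α β : ℓ²(ℤ, ℂ)} {L R : ℓ²(ℤ, ℂ) × ℓ²(ℤ, ℂ) →L[ℂ] ℓ²(ℤ, ℂ) × ℓ²(ℤ, ℂ)}

theorem greenMatrix_succ_left (hL : IsAblowitzLadikLax z α β L) (hLR : L * R = 1)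
    (n m : ℤ) :
    greenMatrix R (n + 1) m = alTransferMatrix z α β n * greenMatrix R n m -
      if n = m then 1 else 0 := by
  have key (v) := hL (R v) n
  simp only [← mul_apply_eq_comp, hLR, one_apply_eq_self] at key
  obtain ⟨h₁₁, h₂₁⟩ := key (lp.single 2 m 1, 0)
  obtain ⟨h₁₂, h₂₂⟩ := key (0, lp.single 2 m 1)
  simp only [lp.single_apply, Pi.single_apply, lp.coeFn_zero, Pi.zero_apply]
    at h₁₁ h₂₁ h₁₂ h₂₂
  ext i j
  fin_cases i <;> fin_cases j
  all_goals simp [greenMatrix, alTransferMatrix, Matrix.ite_apply]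
  · linear_combination h₁₁
  · linear_combination h₁₂
  · linear_combination h₂₁
  · linear_combination h₂₂

theorem apply_single_fst (hL : IsAblowitzLadikLax z α β L) (m : ℤ) :
    L (lp.single 2 m 1, 0) =
      z • (lp.single 2 m 1, 0) - (lp.single 2 (m - 1) 1, 0) + β m • (0, lp.single 2 m 1) := by
  ext n <;>
    simp only [hL _ n, Prod.fst_add, Prod.fst_sub, Prod.smul_fst, Prod.snd_add, Prod.snd_sub,
      Prod.smul_snd, lp.coeFn_add, lp.coeFn_sub, lp.coeFn_smul, lp.coeFn_zero, Pi.add_apply,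
      Pi.sub_apply, Pi.smul_apply, Pi.zero_apply, smul_eq_mul, lp.single_apply,
      Pi.single_apply] <;>
    split_ifs <;> first | omega | simp_all

theorem apply_single_snd (hL : IsAblowitzLadikLax z α β L) (m : ℤ) :
    L (0, lp.single 2 m 1) =
      α m • (lp.single 2 m 1, 0) + z⁻¹ • (0, lp.single 2 m 1) - (0, lp.single 2 (m - 1) 1) := by
  ext n <;>
    simp only [hL _ n, Prod.fst_add, Prod.fst_sub, Prod.smul_fst, Prod.snd_add, Prod.snd_sub,
      Prod.smul_snd, lp.coeFn_add, lp.coeFn_sub, lp.coeFn_smul, lp.coeFn_zero, Pi.add_apply,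
      Pi.sub_apply, Pi.smul_apply, Pi.zero_apply, smul_eq_mul, lp.single_apply,
      Pi.single_apply] <;>
    split_ifs <;> first | omega | simp_all

theorem greenMatrix_pred_right (hL : IsAblowitzLadikLax z α β L) (hRL : R * L = 1)
    (n m : ℤ) :
    greenMatrix R n (m - 1) = greenMatrix R n m * alTransferMatrix z α β m -
      if n = m then 1 else 0 := by
  have h₁ := congrArg R (hL.apply_single_fst m)
  have h₂ := congrArg R (hL.apply_single_snd m)
  simp only [← mul_apply_eq_comp, hRL, one_apply_eq_self, map_add, map_sub, map_smul] at h₁ h₂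
  obtain ⟨h₁₁, h₂₁⟩ := Prod.ext_iff.mp h₁
  obtain ⟨h₁₂, h₂₂⟩ := Prod.ext_iff.mp h₂
  replace h₁₁ := congrFun (congrArg (⇑) h₁₁) n
  replace h₂₁ := congrFun (congrArg (⇑) h₂₁) n
  replace h₁₂ := congrFun (congrArg (⇑) h₁₂) n
  replace h₂₂ := congrFun (congrArg (⇑) h₂₂) n
  simp only [Prod.fst_add, Prod.fst_sub, Prod.smul_fst, Prod.snd_add, Prod.snd_sub,
    Prod.smul_snd, lp.coeFn_add, lp.coeFn_sub, lp.coeFn_smul, lp.coeFn_zero, Pi.add_apply,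
    Pi.sub_apply, Pi.smul_apply, Pi.zero_apply, smul_eq_mul, lp.single_apply,
    Pi.single_apply] at h₁₁ h₂₁ h₁₂ h₂₂
  ext i j
  fin_cases i <;> fin_cases j
  all_goals simp [greenMatrix, alTransferMatrix, Matrix.ite_apply]
  · linear_combination h₁₁
  · linear_combination h₁₂
  · linear_combination h₂₁
  · linear_combination h₂₂

end IsAblowitzLadikLax

/-- For the Ablowitz–Ladik Lax operator `𝐋 = [[z − S, α],[β, z⁻¹ − S]]` on
`ℓ²(ℤ) ⊕ ℓ²(ℤ)` with `|z| ≥ 2` and `α, β ∈ ℓ²`, invertible with matrix-valued Green's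
function `G(n,m)` decaying as `n → ±∞`, one has `det G(n,m) = 0` for all `n, m`. -/
theorem AL_greens_function_det_zero (z : ℂ) (hz : 2 ≤ ‖z‖)
    (α β : lp (fun _ : ℤ => ℂ) 2)
    (bL bR : (lp (fun _ : ℤ => ℂ) 2 × lp (fun _ : ℤ => ℂ) 2) →L[ℂ]
      (lp (fun _ : ℤ => ℂ) 2 × lp (fun _ : ℤ => ℂ) 2))
    (hL : ∀ (f : lp (fun _ : ℤ => ℂ) 2 × lp (fun _ : ℤ => ℂ) 2) (n : ℤ),
      (bL f).1 n = z * f.1 n - f.1 (n + 1) + α n * f.2 n ∧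
      (bL f).2 n = β n * f.1 n + z⁻¹ * f.2 n - f.2 (n + 1))
    (hR1 : bR * bL = 1) (hR2 : bL * bR = 1)
    (G11 G12 G21 G22 : ℤ → ℤ → ℂ)
    (hG11 : ∀ n m : ℤ, G11 n m = (bR (lp.single 2 m 1, 0)).1 n)
    (hG21 : ∀ n m : ℤ, G21 n m = (bR (lp.single 2 m 1, 0)).2 n)
    (hG12 : ∀ n m : ℤ, G12 n m = (bR (0, lp.single 2 m 1)).1 n)
    (hG22 : ∀ n m : ℤ, G22 n m = (bR (0, lp.single 2 m 1)).2 n)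
    (hdecay11 : ∀ m : ℤ, Filter.Tendsto (fun n => G11 n m) Filter.cofinite (nhds 0))
    (hdecay12 : ∀ m : ℤ, Filter.Tendsto (fun n => G12 n m) Filter.cofinite (nhds 0))
    (hdecay21 : ∀ m : ℤ, Filter.Tendsto (fun n => G21 n m) Filter.cofinite (nhds 0))
    (hdecay22 : ∀ m : ℤ, Filter.Tendsto (fun n => G22 n m) Filter.cofinite (nhds 0)) :
    ∀ n m : ℤ, G11 n m * G22 n m - G12 n m * G21 n m = 0 := by
  have hz₀ : z ≠ 0 := by rintro rfl; norm_num at hz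
  have hdet (n m : ℤ) : (greenMatrix bR n m).det = G11 n m * G22 n m - G12 n m * G21 n m := by
    simp [greenMatrix, Matrix.det_fin_two_of, hG11, hG12, hG21, hG22]
  have hdecay (m : ℤ) : Tendsto (fun n => (greenMatrix bR n m).det) cofinite (𝓝 0) := by
    simpa [hdet] using ((hdecay11 m).mul (hdecay22 m)).sub ((hdecay12 m).mul (hdecay21 m))
  intro n m
  rw [← hdet]
  exact det_green_eq_zero (summable_norm_det_alTransferMatrix_sub_one hz₀ α β)
    (IsAblowitzLadikLax.greenMatrix_succ_left hL hR2)
    (IsAblowitzLadikLax.greenMatrix_pred_right hL hR1) hdecay n m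
end
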